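/- arXiv:2010.10734 — 4 statements merged into one kernel-verified Lean document; each statement's English description precedes it below -/
import Mathlib

section
/- Let k be a field, let W and V be finite-dimensional k-vector spaces with dim_k W = m and dim_k V = n, and let A : W → V be a k-linear map of rank ℓ. Then the subspace T_A := { T ∈ Hom_k(W,V) : T x ∈ range A for every x ∈ ker A } has dimension dim_k T_A = m·n − (m−ℓ)·(n−ℓ); equivalently, its codimension in Hom_k(W,V) equals (m−ℓ)(n−ℓ). -/
/-- If `dim W = m`, `dim V = n` and `A : W → V` has rank `ℓ`, then the subspace
`T_A = {T : Hom(W,V) | T (ker A) ⊆ range A}` has dimension `m·n − (m−ℓ)·(n−ℓ)`. -/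
theorem stmt_2 (k : Type*) [Field k] (V W : Type*) [AddCommGroup V] [Module k V]
    [AddCommGroup W] [Module k W] [FiniteDimensional k V] [FiniteDimensional k W]
    (m n ℓ : ℕ) (hW : Module.finrank k W = m) (hV : Module.finrank k V = n)
    (A : W →ₗ[k] V) (hA : Module.finrank k (LinearMap.range A) = ℓ) :
    Module.finrank k
      (Submodule.compatibleMaps (LinearMap.ker A) (LinearMap.range A)) =
      m * n - (m - ℓ) * (n - ℓ) := by
  let p := LinearMap.ker A
  let q := LinearMap.range A
  -- the "evaluation" map Hom(W,V) → Hom(p, V/q)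
  let φ : (W →ₗ[k] V) →ₗ[k] (p →ₗ[k] V ⧸ q) :=
    { toFun := fun T => (q.mkQ.comp T).comp p.subtype
      map_add' := fun T S => by ext x; simp
      map_smul' := fun c T => by ext x; simp }
  have hker : LinearMap.ker φ = Submodule.compatibleMaps p q := by
    ext T
    simp only [LinearMap.mem_ker, Submodule.compatibleMaps, Submodule.mem_mk,
      AddSubmonoid.mem_mk, AddSubsemigroup.mem_mk, Set.mem_setOf_eq, SetLike.le_def,
      Submodule.mem_comap, φ]
    constructor
    · intro h x hx
      have := congrArg (fun f => f ⟨x, hx⟩) h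
      simpa [Submodule.Quotient.mk_eq_zero] using this
    · intro h
      ext x
      simpa [Submodule.Quotient.mk_eq_zero] using h x.2
  have hsurj : Function.Surjective φ := by
    intro g
    -- lift g : p → V⧸q to p → V using a section of mkQ, then extend to W
    obtain ⟨s, hs⟩ := q.mkQ.exists_rightInverse_of_surjective
      (LinearMap.range_eq_top.2 q.mkQ_surjective)
    obtain ⟨T, hT⟩ := LinearMap.exists_extend (s.comp g)
    refine ⟨T, ?_⟩
    ext x
    have : T x.1 = s (g x) := by
      have := congrArg (fun f => f x) hT
      simpa using this
    have hsx := congrArg (fun f => f (g x)) hs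
    simp only [LinearMap.comp_apply, LinearMap.id_apply] at hsx
    simp [φ, this, hsx]
  -- dimensions
  have hp : Module.finrank k p = m - ℓ := by
    have := LinearMap.finrank_range_add_finrank_ker A
    simp only [p]; omega
  have hq : Module.finrank k (V ⧸ q) = n - ℓ := by
    have := Submodule.finrank_quotient_add_finrank q
    simp only [q] at this ⊢; omega
  have hcodim : Module.finrank k (p →ₗ[k] V ⧸ q) = (m - ℓ) * (n - ℓ) := by
    rw [Module.finrank_linearMap, hp, hq]
  have hdom : Module.finrank k (W →ₗ[k] V) = m * n := by
    rw [Module.finrank_linearMap, hW, hV]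
  have hrange : Module.finrank k (LinearMap.range φ) = (m - ℓ) * (n - ℓ) := by
    rw [LinearMap.range_eq_top.2 hsurj]
    simpa using hcodim
  have := LinearMap.finrank_range_add_finrank_ker φ
  rw [hrange, hker, hdom] at this
  generalize hx : (m - ℓ) * (n - ℓ) = x at this ⊢
  generalize hy : m * n = y at this ⊢
  simp only [p, q] at this
  omega
end

section
/- Let k be a field, let W and V be finite-dimensional k-vector spaces, and let A : W → V be a k-linear map. For D ∈ Hom_k(V, W) the following are equivalent: (i) trace(T ∘ D) = 0 for every T ∈ Hom_k(W, V) with T(ker A) ⊆ range A; (ii) D ∘ A = 0 and A ∘ D = 0. In other words, under the trace pairing Hom_k(W,V) × Hom_k(V,W) → k, (T, D) ↦ tr(T ∘ D), the annihilator of the subspace { T : T(ker A) ⊆ range A } is exactly { D : D ∘ A = 0 and A ∘ D = 0 }. -/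
/-!
Testing `T ∘ D` against rank-one maps `T = f ⊗ v` gives `tr (T ∘ D) = f (D v)`. Rank-one maps
with `v ∈ range A` are admissible, which forces `D ∘ A = 0`; so are those with `f` vanishing on
`ker A`, which forces `D v ∈ ker A`, i.e. `A ∘ D = 0`. Conversely, if `D ∘ A = 0 = A ∘ D` then
`D` maps into `ker A` and kills `range A`, so `D ∘ T ∘ D = 0` for admissible `T`; hence `T ∘ D`
is nilpotent and has trace zero.
-/

open LinearMap Module

section Trace

variable {R M N : Type*} [CommRing R] [AddCommGroup M] [Module R M] [AddCommGroup N] [Module R N]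

theorem LinearMap.trace_smulRight_comp [Free R M] [Module.Finite R M]
    (f : N →ₗ[R] R) (x : M) (D : M →ₗ[R] N) :
    trace R M (f.smulRight x ∘ₗ D) = f (D x) := by
  have : f.smulRight x ∘ₗ D = (f ∘ₗ D).smulRight x := by ext; simp
  rw [this, trace_smulRight, comp_apply]

theorem LinearMap.trace_comp_eq_zero_of_comp_comp_eq_zero [IsReduced R]
    {T : N →ₗ[R] M} {D : M →ₗ[R] N} (h : D ∘ₗ T ∘ₗ D = 0) :
    trace R M (T ∘ₗ D) = 0 := by
  have hnil : IsNilpotent (T ∘ₗ D : End R M) :=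
    ⟨2, by rw [pow_two, Module.End.mul_eq_comp, comp_assoc, h, comp_zero]⟩
  exact (isNilpotent_trace_of_isNilpotent hnil).eq_zero

end Trace

theorem LinearMap.comp_comp_eq_zero_of_mapsTo_ker_range {R V W : Type*} [Semiring R]
    [AddCommMonoid V] [Module R V] [AddCommMonoid W] [Module R W]
    {A : W →ₗ[R] V} {D : V →ₗ[R] W} {T : W →ₗ[R] V}
    (hDA : D ∘ₗ A = 0) (hAD : A ∘ₗ D = 0) (hT : ∀ x ∈ ker A, T x ∈ range A) :
    D ∘ₗ T ∘ₗ D = 0 := by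
  ext v
  obtain ⟨w, hw⟩ := hT (D v) (by simpa using congr($hAD v))
  simpa [← hw] using congr($hDA w)

theorem stmt_3_general (k : Type*) [Field k] (V W : Type*) [AddCommGroup V] [Module k V]
    [AddCommGroup W] [Module k W] [FiniteDimensional k V]
    (A : W →ₗ[k] V) (D : V →ₗ[k] W) :
    (∀ T : W →ₗ[k] V, (∀ x ∈ LinearMap.ker A, T x ∈ LinearMap.range A) →
      LinearMap.trace k V (T ∘ₗ D) = 0) ↔ (D ∘ₗ A = 0 ∧ A ∘ₗ D = 0) := by
  refine ⟨fun h ↦ ⟨?_, ?_⟩, fun ⟨hDA, hAD⟩ T hT ↦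
    trace_comp_eq_zero_of_comp_comp_eq_zero (comp_comp_eq_zero_of_mapsTo_ker_range hDA hAD hT)⟩
  · ext w
    refine (forall_dual_apply_eq_zero_iff k _).1 fun f ↦ ?_
    simpa [trace_smulRight_comp] using
      h (f.smulRight (A w)) fun x _ ↦ Submodule.smul_mem _ _ (mem_range_self A w)
  · ext v
    suffices D v ∈ ker A by simpa using this
    refine (Subspace.forall_mem_dualAnnihilator_apply_eq_zero_iff _ _).1 fun g hg ↦ ?_
    simpa [trace_smulRight_comp] using
      h (g.smulRight v) fun x hx ↦ by simp [(Submodule.mem_dualAnnihilator g).1 hg x hx]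

/-- Under the trace pairing on `Hom(W,V) × Hom(V,W)`, the annihilator of the subspace
`{T : T (ker A) ⊆ range A}` is exactly `{D : D ∘ A = 0 and A ∘ D = 0}`. -/
theorem stmt_3 (k : Type*) [Field k] (V W : Type*) [AddCommGroup V] [Module k V]
    [AddCommGroup W] [Module k W] [FiniteDimensional k V] [FiniteDimensional k W]
    (A : W →ₗ[k] V) (D : V →ₗ[k] W) :
    (∀ T : W →ₗ[k] V, (∀ x ∈ LinearMap.ker A, T x ∈ LinearMap.range A) →
      LinearMap.trace k V (T ∘ₗ D) = 0) ↔ (D ∘ₗ A = 0 ∧ A ∘ₗ D = 0) :=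
  stmt_3_general k V W A D
end

section
/- Let R be a commutative ring, let c : ℤ → R satisfy c(n) = 0 for all n < 0, let d be a natural number, and let λ, μ : {1,…,d} → ℤ be weakly decreasing sequences. If λ_j < μ_j for some j, then the skew Schur determinant Δ_{λ/μ}(c) := det( c(λ_i − μ_j + j − i) )_{1 ≤ i,j ≤ d} equals 0. -/
/-- The skew Schur determinant `Δ_{λ/μ}(c) = det(c (λ_i - μ_j + j - i))`. -/
def skewSchur {R : Type*} [CommRing R] (c : ℤ → R) (d : ℕ) (lam mu : Fin d → ℤ) : R :=
  (Matrix.of fun i j : Fin d => c (lam i - mu j + ((j : ℕ) : ℤ) - ((i : ℕ) : ℤ))).det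

/-- If `c` vanishes in negative degrees and `λ_j < μ_j` for some `j`, then
`Δ_{λ/μ}(c) = 0`. -/
theorem stmt_4 {R : Type*} [CommRing R] (c : ℤ → R) (hc : ∀ n : ℤ, n < 0 → c n = 0)
    (d : ℕ) (lam mu : Fin d → ℤ) (hlam : Antitone lam) (hmu : Antitone mu)
    (h : ∃ j, lam j < mu j) :
    skewSchur c d lam mu = 0 := by
  obtain ⟨j, hj⟩ := h
  unfold skewSchur
  rw [Matrix.det_apply]
  apply Finset.sum_eq_zero
  intro σ _
  -- find i ≤ j with j ≤ σ i
  have key : ∃ i : Fin d, i ≤ j ∧ j ≤ σ i := by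
    by_contra hcon
    push_neg at hcon
    have hmap : ∀ i ∈ Finset.Iic j, σ i ∈ Finset.Iio j := by
      intro i hi
      simp only [Finset.mem_Iic] at hi
      simp only [Finset.mem_Iio]
      exact hcon i hi
    have hinj : Set.InjOn σ (Finset.Iic j) := fun a _ b _ hab => σ.injective hab
    have := Finset.card_le_card_of_injOn σ hmap hinj
    rw [Fin.card_Iic, Fin.card_Iio] at this
    omega
  obtain ⟨i, hij, hji⟩ := key
  have hzero : (Matrix.of fun i j : Fin d =>
      c (lam i - mu j + ((j : ℕ) : ℤ) - ((i : ℕ) : ℤ))) (σ i) i = 0 := by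
    simp only [Matrix.of_apply]
    apply hc
    have h1 : lam (σ i) ≤ lam j := hlam hji
    have h2 : mu j ≤ mu i := hmu hij
    have h3 : ((i : ℕ) : ℤ) ≤ ((σ i : ℕ) : ℤ) := by
      exact_mod_cast Fin.le_def.mp (le_trans hij hji)
    omega
  rw [Finset.prod_eq_zero (f := fun k : Fin d => (Matrix.of fun i j : Fin d =>
      c (lam i - mu j + ((j : ℕ) : ℤ) - ((i : ℕ) : ℤ))) (σ k) k)
      (Finset.mem_univ i) hzero, smul_zero]
end

section
/- Let R be a commutative ring and let a, b : ℤ → R satisfy a(n) = b(n) = 0 for all n < 0, and suppose that Σ_{i+j=n, i,j ≥ 0} a(i)·b(j) equals 1 if n = 0 and equals 0 for every n ≥ 1 (i.e. the power series Σ a(n)t^n and Σ b(n)t^n are mutually inverse). Then for every natural number d and all weakly decreasing sequences λ, μ : {1,…,d} → ℤ, one has Σ_ν Δ_{λ/ν}(a)·Δ_{ν/μ}(b) = 1 if λ = μ and = 0 otherwise, where the sum runs over all weakly decreasing sequences ν : {1,…,d} → ℤ with μ_j ≤ ν_j ≤ λ_j for all j. -/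
/-!
After the change of coordinates `ν ↦ (k ↦ k - ν k)`, which turns weakly decreasing sequences
into strictly increasing ones, `Δ_{λ/ν}(c)` is the minor of the Toeplitz matrix
`T_c = (c (v - u))_{u,v ∈ ℤ}` on rows `λ` and columns `ν`. Inverse power series give
`T_a T_b = 1`, and this survives truncation to any finite window of summation indices containing
the relevant intervals. The Cauchy–Binet formula for the minor of `T_a T_b` on rows `λ` and
columns `μ` is then a sum over all strictly increasing `ν`, and since `T_a`, `T_b` are upper
triangular only the `ν` with `μ ≤ ν ≤ λ` contribute.
-/

open Finset Matrix Equiv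

section

variable {R : Type*} [CommRing R] {d : ℕ}

theorem Finset.sum_filter_injective_eq_sum_strictMono_sum_perm {ι M : Type*} [LinearOrder ι]
    [AddCommMonoid M] (S : Finset ι) (F : (Fin d → ι) → M)
    [DecidablePred fun p : Fin d → ι => Function.Injective p]
    [DecidablePred fun p : Fin d → ι => StrictMono p] :
    ∑ p ∈ (Fintype.piFinset fun _ => S).filter Function.Injective, F p =
      ∑ z ∈ (Fintype.piFinset fun _ => S).filter StrictMono, ∑ τ : Perm (Fin d), F (z ∘ τ) := by
  rw [← sum_product']
  refine sum_nbij' (fun p => (p ∘ Tuple.sort p, (Tuple.sort p)⁻¹)) (fun zτ => zτ.1 ∘ zτ.2)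
    (fun p hp => ?_) (fun zτ hzτ => ?_) (fun p _ => by simp [Function.comp_assoc])
    (fun zτ hzτ => ?_) (fun p _ => by simp [Function.comp_assoc])
  · simp only [mem_filter, Fintype.mem_piFinset] at hp
    simp only [mem_product, mem_filter, Fintype.mem_piFinset, mem_univ, and_true,
      Function.comp_apply]
    exact ⟨fun i => hp.1 _,
      (Tuple.monotone_sort p).strictMono_of_injective (hp.2.comp (Tuple.sort p).injective)⟩
  · simp only [mem_product, mem_filter, Fintype.mem_piFinset, mem_univ, and_true] at hzτ
    simp only [mem_filter, Fintype.mem_piFinset, Function.comp_apply]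
    exact ⟨fun i => hzτ.1 _, hzτ.2.injective.comp zτ.2.injective⟩
  · obtain ⟨z, τ⟩ := zτ
    simp only [mem_product, mem_filter, mem_univ, and_true] at hzτ
    have hsort : Tuple.sort (z ∘ τ) = τ⁻¹ := by
      refine (Tuple.eq_sort_iff.2 ⟨?_, fun i j hij hzij => ?_⟩).symm
      · simpa [Function.comp_assoc] using hzτ.2.monotone
      · exact absurd (hzτ.2.injective (by simpa using hzij)) (by simpa using hij.ne)
    simp [hsort, Function.comp_assoc]

namespace Matrix

theorem det_of_sum_mul_eq_sum_prod_mul_det {m ι : Type*} [Fintype m] [DecidableEq m]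
    [DecidableEq ι] (S : Finset ι) (A : Matrix m ι R) (B : Matrix ι m R) :
    det (of fun i j => ∑ k ∈ S, A i k * B k j) =
      ∑ p ∈ Fintype.piFinset fun _ => S, (∏ j, B (p j) j) * det (A.submatrix id p) := by
  have hrows : (of fun i j => ∑ k ∈ S, A i k * B k j)ᵀ = fun j => ∑ k ∈ S, B k j • Aᵀ k := by
    ext j i
    simp [Finset.sum_apply, mul_comm]
  rw [← det_transpose, hrows]
  refine (detRowAlternating.map_sum_finset _ _).trans (sum_congr rfl fun p _ => ?_)
  rw [← det_transpose]
  exact detRowAlternating.toMultilinearMap.map_smul_univ (fun j => B (p j) j) fun j => Aᵀ (p j)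

/-- The Cauchy–Binet formula, for a product whose inner sum runs over a finite set `S`. -/
theorem det_of_sum_mul_eq_sum_strictMono {ι : Type*} [LinearOrder ι] (S : Finset ι)
    (A : Matrix (Fin d) ι R) (B : Matrix ι (Fin d) R)
    [DecidablePred fun p : Fin d → ι => StrictMono p] :
    det (of fun i j => ∑ k ∈ S, A i k * B k j) =
      ∑ z ∈ (Fintype.piFinset fun _ => S).filter StrictMono,
        det (A.submatrix id z) * det (B.submatrix z id) := by
  classical
  have hinj : ∀ p ∈ Fintype.piFinset fun _ => S,
      (∏ j, B (p j) j) * det (A.submatrix id p) ≠ 0 → Function.Injective p := by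
    intro p _ hp
    by_contra hnot
    obtain ⟨i, j, hij, hne⟩ := Function.not_injective_iff.1 hnot
    exact hp (by rw [det_zero_of_column_eq hne fun k => by simp [hij], mul_zero])
  rw [det_of_sum_mul_eq_sum_prod_mul_det, ← sum_filter_of_ne hinj,
    sum_filter_injective_eq_sum_strictMono_sum_perm]
  refine sum_congr rfl fun z _ => ?_
  rw [det_apply (B.submatrix z id), mul_sum]
  refine sum_congr rfl fun τ _ => ?_
  have hperm : A.submatrix id (z ∘ τ) = (A.submatrix id z).submatrix id τ := rfl
  rw [hperm, det_permute', Units.smul_def, zsmul_eq_mul]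
  simp only [submatrix_apply, id, Function.comp_apply]
  ring

theorem det_eq_zero_of_forall_ge_le_eq_zero (M : Matrix (Fin d) (Fin d) R) (j : Fin d)
    (h : ∀ r c, j ≤ r → c ≤ j → M r c = 0) : M.det = 0 := by
  rw [det_apply]
  refine sum_eq_zero fun σ _ => ?_
  obtain ⟨c, hc, hσc⟩ : ∃ c, c ≤ j ∧ j ≤ σ c := by
    by_contra! hcon
    have hcard := card_le_card_of_injOn σ
      (fun c hc => mem_Iio.2 (hcon c (mem_Iic.1 hc))) σ.injective.injOn
    rw [Fin.card_Iic, Fin.card_Iio] at hcard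
    omega
  rw [prod_eq_zero (f := fun i => M (σ i) i) (mem_univ c) (h (σ c) c hσc hc), smul_zero]

theorem det_one_submatrix_of_strictMono {ι : Type*} [LinearOrder ι] {x y : Fin d → ι}
    (hx : StrictMono x) (hy : StrictMono y) :
    det ((1 : Matrix ι ι R).submatrix x y) = if x = y then 1 else 0 := by
  split_ifs with hxy
  · rw [hxy, submatrix_one _ hy.injective, det_one]
  · suffices ∃ i, ∀ j, x i ≠ y j from
      let ⟨i, hi⟩ := this
      det_eq_zero_of_row_eq_zero i fun j => by simp [one_apply_ne (hi j)]
    by_contra! hrange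
    choose σ hσ using hrange
    have hσ_mono : StrictMono σ := fun i j hij => hy.lt_iff_lt.1 (by simpa [← hσ] using hx hij)
    exact hxy (funext fun i => by rw [hσ i, hσ_mono.eq_id]; rfl)

end Matrix

theorem sum_Icc_mul_eq_sum_antidiagonal (f g : ℤ → R) {u w : ℤ} (huw : u ≤ w) :
    ∑ k ∈ Icc u w, f (k - u) * g (w - k) =
      ∑ p ∈ HasAntidiagonal.antidiagonal (w - u).toNat, f p.1 * g p.2 := by
  refine sum_nbij' (fun k => ((k - u).toNat, (w - k).toNat)) (fun p => u + p.1)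
    ?_ ?_ ?_ ?_ fun k hk => ?_ <;>
    simp only [mem_Icc, HasAntidiagonal.mem_antidiagonal, Prod.forall, Prod.mk.injEq] at *
  any_goals omega
  rw [Int.toNat_of_nonneg (by omega), Int.toNat_of_nonneg (by omega)]

theorem sum_mul_eq_ite_of_antidiagonal {a b : ℤ → R}
    (ha : ∀ n : ℤ, n < 0 → a n = 0) (hb : ∀ n : ℤ, n < 0 → b n = 0)
    (hab : ∀ n : ℕ, (∑ p ∈ HasAntidiagonal.antidiagonal n, a (p.1 : ℤ) * b (p.2 : ℤ)) =
      if n = 0 then 1 else 0)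
    {S : Finset ℤ} {u w : ℤ} (hS : Icc u w ⊆ S) :
    ∑ k ∈ S, a (k - u) * b (w - k) = if u = w then 1 else 0 := by
  rw [← sum_subset hS fun k _ hk => ?_]
  · rcases le_or_gt u w with huw | hwu
    · rw [sum_Icc_mul_eq_sum_antidiagonal _ _ huw, hab]
      exact if_congr (by omega) rfl rfl
    · rw [Icc_eq_empty_of_lt hwu, sum_empty, if_neg hwu.ne']
  · rcases lt_or_ge k u with hku | huk
    · rw [ha _ (by omega), zero_mul]
    · rw [hb _ (by simp at hk; omega), mul_zero]

def toeplitz (c : ℤ → R) : Matrix ℤ ℤ R := of fun u v => c (v - u)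

theorem det_toeplitz_submatrix_eq_zero_of_not_le {c : ℤ → R} (hc : ∀ n : ℤ, n < 0 → c n = 0)
    {x z : Fin d → ℤ} (hx : Monotone x) (hz : Monotone z) (hxz : ¬ x ≤ z) :
    det ((toeplitz c).submatrix x z) = 0 := by
  obtain ⟨j, hj⟩ : ∃ j, z j < x j := by simpa [Pi.le_def] using hxz
  refine det_eq_zero_of_forall_ge_le_eq_zero _ j fun r c hjr hcj => hc _ ?_
  have := hz hcj
  have := hx hjr
  show z c - x r < 0
  omega

theorem det_toeplitz_mul_det_toeplitz_eq_zero_of_not_mem {a b : ℤ → R}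
    (ha : ∀ n : ℤ, n < 0 → a n = 0) (hb : ∀ n : ℤ, n < 0 → b n = 0) {x y z : Fin d → ℤ}
    (hx : Monotone x) (hy : Monotone y) (hz : Monotone z) (hxzy : z ∉ Icc x y) :
    det ((toeplitz a).submatrix x z) * det ((toeplitz b).submatrix z y) = 0 := by
  rcases (by simpa [or_iff_not_imp_left] using hxzy : ¬ x ≤ z ∨ ¬ z ≤ y) with hxz | hzy
  · rw [det_toeplitz_submatrix_eq_zero_of_not_le ha hx hz hxz, zero_mul]
  · rw [det_toeplitz_submatrix_eq_zero_of_not_le hb hz hy hzy, mul_zero]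

def idSub (ν : Fin d → ℤ) : Fin d → ℤ := fun k => (k : ℤ) - ν k

theorem idSub_idSub (ν : Fin d → ℤ) : idSub (idSub ν) = ν := by
  ext k
  simp [idSub]

theorem idSub_injective : Function.Injective (idSub (d := d)) :=
  Function.LeftInverse.injective idSub_idSub

theorem idSub_le_idSub_iff {ν ν' : Fin d → ℤ} : idSub ν ≤ idSub ν' ↔ ν' ≤ ν := by
  simp only [Pi.le_def, idSub, sub_le_sub_iff_left]

theorem strictMono_idSub_iff {ν : Fin d → ℤ} : StrictMono (idSub ν) ↔ Antitone ν := by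
  cases d with
  | zero => exact iff_of_true (fun i => i.elim0) fun i => i.elim0
  | succ n =>
    rw [Fin.strictMono_iff_lt_succ, Fin.antitone_iff_succ_le]
    refine forall_congr' fun i => ?_
    simp only [idSub, Fin.val_succ, Fin.val_castSucc]
    omega

theorem skewSchur_eq_det_toeplitz (c : ℤ → R) (lam mu : Fin d → ℤ) :
    skewSchur c d lam mu = det ((toeplitz c).submatrix (idSub lam) (idSub mu)) := by
  unfold skewSchur toeplitz idSub
  congr 1
  ext i j
  simp only [of_apply, submatrix_apply]
  ring_nf

theorem sum_antitone_Icc_eq_sum_strictMono_Icc {M : Type*} [AddCommMonoid M]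
    (lam mu : Fin d → ℤ) (F : (Fin d → ℤ) → M)
    [DecidablePred fun ν : Fin d → ℤ => Antitone ν]
    [DecidablePred fun z : Fin d → ℤ => StrictMono z] :
    ∑ ν ∈ (Icc mu lam).filter Antitone, F ν =
      ∑ z ∈ (Icc (idSub lam) (idSub mu)).filter StrictMono, F (idSub z) := by
  refine sum_nbij' idSub idSub (fun ν hν => ?_) (fun z hz => ?_) (fun ν _ => idSub_idSub ν)
    (fun z _ => idSub_idSub z) fun ν _ => by rw [idSub_idSub]
  · simp only [mem_filter, mem_Icc] at hν ⊢
    exact ⟨⟨idSub_le_idSub_iff.2 hν.1.2, idSub_le_idSub_iff.2 hν.1.1⟩,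
      strictMono_idSub_iff.2 hν.2⟩
  · simp only [mem_filter, mem_Icc] at hz ⊢
    rw [← idSub_idSub z] at hz
    exact ⟨⟨idSub_le_idSub_iff.1 hz.1.2, idSub_le_idSub_iff.1 hz.1.1⟩,
      strictMono_idSub_iff.1 hz.2⟩

end

open Classical in
/-- If the power series with coefficients `a` and `b` are mutually inverse, then
`Σ_{μ ⊆ ν ⊆ λ} Δ_{λ/ν}(a) · Δ_{ν/μ}(b) = δ_{λ,μ}`, the sum running over weakly
decreasing `ν` with `μ_j ≤ ν_j ≤ λ_j` for all `j`. -/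
theorem stmt_8 {R : Type*} [CommRing R] (a b : ℤ → R)
    (ha : ∀ n : ℤ, n < 0 → a n = 0) (hb : ∀ n : ℤ, n < 0 → b n = 0)
    (hab : ∀ n : ℕ, (∑ p ∈ Finset.HasAntidiagonal.antidiagonal n, a (p.1 : ℤ) * b (p.2 : ℤ)) =
      if n = 0 then 1 else 0)
    (d : ℕ) (lam mu : Fin d → ℤ) (hlam : Antitone lam) (hmu : Antitone mu) :
    (∑ nu ∈ (Finset.Icc mu lam).filter (fun nu => Antitone nu),
        skewSchur a d lam nu * skewSchur b d nu mu) =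
      if lam = mu then 1 else 0 := by
  set x := idSub lam
  set y := idSub mu
  have hx : StrictMono x := strictMono_idSub_iff.2 hlam
  have hy : StrictMono y := strictMono_idSub_iff.2 hmu
  set S := univ.biUnion fun i => univ.biUnion fun j => Icc (x i) (y j)
  have hS : ∀ i j, Icc (x i) (y j) ⊆ S := fun i j k hk =>
    mem_biUnion.2 ⟨i, mem_univ i, mem_biUnion.2 ⟨j, mem_univ j, hk⟩⟩
  calc _ = ∑ z ∈ (Icc x y).filter StrictMono,
        det ((toeplitz a).submatrix x z) * det ((toeplitz b).submatrix z y) := by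
        simp only [skewSchur_eq_det_toeplitz, sum_antitone_Icc_eq_sum_strictMono_Icc, idSub_idSub]
        rfl
    _ = ∑ z ∈ (Fintype.piFinset fun _ => S).filter StrictMono,
        det ((toeplitz a).submatrix x z) * det ((toeplitz b).submatrix z y) := by
        refine sum_subset (fun z hz => ?_) fun z hz hzxy =>
          det_toeplitz_mul_det_toeplitz_eq_zero_of_not_mem ha hb hx.monotone hy.monotone
            (mem_filter.1 hz).2.monotone fun h => hzxy (mem_filter.2 ⟨h, (mem_filter.1 hz).2⟩)
        simp only [mem_filter, mem_Icc, Fintype.mem_piFinset] at hz ⊢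
        exact ⟨fun i => hS i i (mem_Icc.2 ⟨hz.1.1 i, hz.1.2 i⟩), hz.2⟩
    _ = det ((1 : Matrix ℤ ℤ R).submatrix x y) := by
        refine (det_of_sum_mul_eq_sum_strictMono S ((toeplitz a).submatrix x id)
          ((toeplitz b).submatrix id y)).symm.trans (congrArg det ?_)
        ext i j
        exact sum_mul_eq_ite_of_antidiagonal ha hb hab (hS i j)
    _ = if lam = mu then 1 else 0 := by
        rw [det_one_submatrix_of_strictMono hx hy]
        exact if_congr idSub_injective.eq_iff rfl rfl
end
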